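/- Let α, β > −1 with a² + 2b² + 3a < 0. Then there exists M ∈ ℕ such that for all m ≥ M the linearization coefficient g_T(2m+1, 2m+1; 4) of the generalized Chebyshev polynomials is strictly negative. -/

import Mathlib

open Polynomial Finset

noncomputable def poch (c : ℝ) (k : ℕ) : ℝ := (ascPochhammer ℝ k).eval c

/-- Jacobi polynomial `R_n^{(α,β)}`, normalized by `R_n^{(α,β)}(1) = 1`. -/
noncomputable def jacobiR (α β : ℝ) (n : ℕ) : Polynomial ℝ :=
  ∑ k ∈ Finset.range (n + 1),
    Polynomial.C (poch (-(n : ℝ)) k * poch ((n : ℝ) + α + β + 1) k /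
      (poch (α + 1) k * 2 ^ k * (Nat.factorial k : ℝ))) * (1 - Polynomial.X) ^ k

/-- Generalized Chebyshev polynomial `T_n^{(α,β)}`. -/
noncomputable def genCheb (α β : ℝ) (n : ℕ) : Polynomial ℝ :=
  if n % 2 = 0 then (jacobiR α β (n / 2)).comp (2 * Polynomial.X ^ 2 - 1)
  else Polynomial.X * (jacobiR α (β + 1) (n / 2)).comp (2 * Polynomial.X ^ 2 - 1)

/-- Gasper's set `V` (with `a = α+β+1`, `b = α−β`). -/
def Vset : Set (ℝ × ℝ) := { p | -1 < p.1 ∧ -1 < p.2 ∧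
  ((p.1 + p.2 + 1) ^ 2 - 7 * (p.1 + p.2 + 1) - 24) * (p.1 - p.2) ^ 2 ≤
    (p.1 + p.2 + 1) * ((p.1 + p.2 + 1) + 5) * ((p.1 + p.2 + 1) + 3) ^ 2 ∧
  0 ≤ p.1 - p.2 }

/-- The set `V′`. -/
def V'set : Set (ℝ × ℝ) := { p | -1 < p.1 ∧ -1 < p.2 ∧
  0 ≤ (p.1 + p.2 + 1) ^ 2 + 2 * (p.1 - p.2) ^ 2 + 3 * (p.1 + p.2 + 1) ∧
  0 ≤ p.1 - p.2 }

/-- The set `Δ`. -/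
def Dset : Set (ℝ × ℝ) := { p | -1 < p.1 ∧ -1 < p.2 ∧
  0 ≤ p.1 + p.2 + 1 ∧ 0 ≤ p.1 - p.2 }

/-- The coefficient function `ι(m, m+s; ·)` (with parameters `a`, `b`). -/
noncomputable def iotaF (a b : ℝ) (m s : ℕ) (j : ℝ) : ℝ :=
  b * ((2 * (m : ℝ) - j) * (2 * (m : ℝ) + 2 * (s : ℝ) + j + 2 * a) *
        ((2 * (s : ℝ) + j + 1) * (j + 1)) / (2 * (s : ℝ) + 2 * j + a + 1)
      - (2 * (m : ℝ) - j + 1) * (2 * (m : ℝ) + 2 * (s : ℝ) + j + 2 * a - 1) *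
        ((2 * (s : ℝ) + j) * j) / (2 * (s : ℝ) + 2 * j + a - 1))

/-- The coefficient function `θ(m, m+s; ·)` (with parameters `a`, `b`). -/
noncomputable def thetaF (a b : ℝ) (m s : ℕ) (j : ℝ) : ℝ :=
  (2 * (m : ℝ) - j + a - 1) * (2 * (m : ℝ) + 2 * (s : ℝ) + j + a + 1) *
    ((2 * (s : ℝ) + j + 1) * (2 * (s : ℝ) + 2 * j + a - b + 1)) /
    ((2 * (s : ℝ) + 2 * j + a + 1) * (2 * (s : ℝ) + 2 * j + a + 2)) * (j + 1)

/-- The coefficient function `κ(m, m+s; ·)` (with parameters `a`, `b`). -/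
noncomputable def kappaF (a b : ℝ) (m s : ℕ) (j : ℝ) : ℝ :=
  (2 * (m : ℝ) - j + 1) * (2 * (m : ℝ) + 2 * (s : ℝ) + j + 2 * a - 1) *
    ((2 * (s : ℝ) + j + a - 1) * (2 * (s : ℝ) + 2 * j + a + b - 1)) /
    ((2 * (s : ℝ) + 2 * j + a - 2) * (2 * (s : ℝ) + 2 * j + a - 1)) * (j + a - 1)

/-- Recurrence coefficient `a^T_{2k+1} = (2k+a+b+1)/(4k+2a+2)`. -/
noncomputable def aTc (a b : ℝ) (k : ℕ) : ℝ :=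
  (2 * (k : ℝ) + a + b + 1) / (4 * (k : ℝ) + 2 * a + 2)

/-- Recurrence coefficient `c^T_{2k+1} = (2k+a−b+1)/(4k+2a+2)`. -/
noncomputable def cTc (a b : ℝ) (k : ℕ) : ℝ :=
  (2 * (k : ℝ) + a - b + 1) / (4 * (k : ℝ) + 2 * a + 2)

/-- The auxiliary function `p`. -/
noncomputable def pF (a b : ℝ) (m s j : ℕ) : ℝ :=
  cTc a b (s + j + 1) / aTc a b (s + j) *
    (iotaF (a + 1) (b - 1) m s (j : ℝ) / thetaF (a + 1) (b - 1) m s (j : ℝ))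

/-- The auxiliary function `q`. -/
noncomputable def qF (a b : ℝ) (m s j : ℕ) : ℝ :=
  (cTc a b (s + j) * cTc a b (s + j + 1)) / (aTc a b (s + j - 1) * aTc a b (s + j)) *
    (kappaF (a + 1) (b - 1) m s (j : ℝ) / thetaF (a + 1) (b - 1) m s (j : ℝ))


/-!
The generalized Chebyshev polynomials satisfy a three-term recurrence
`x T_n = a_n T_{n+1} + c_n T_{n-1}`, which comes from two contiguous relations between the
hypergeometric coefficients of the Jacobi polynomials, and `deg T_n = n`, so they form a basis
of `ℝ[X]` and `g(m, n; k)` is the `T_k`-coordinate of `T_m T_n`.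
Reading off the `T_0`-coordinate of `T_m T_n T_n` in two ways gives the duality
`g(m, n; n) g(n, n; 0) = g(n, n; m) g(m, m; 0)`, and the recurrence shows `g(n, n; 0) > 0`.
Hence `g(N, N; 4)` has the sign of `g(4, N; N)`, the `T_N`-coordinate of `T_4 T_N`.
Writing `T_4` as a quadratic polynomial in `x²` and expanding `x² T_N`, `x⁴ T_N` with the
recurrence, `g(4, N; N)` tends to `(a² + 2b² + 3a) / (8(α+1)(α+2))` because `a_n, c_n → 1/2`;
this limit is negative by hypothesis.
-/

open Filter Topology
open scoped Nat

lemma poch_zero (c : ℝ) : poch c 0 = 1 := by simp [poch]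

lemma poch_succ (c : ℝ) (k : ℕ) : poch c (k + 1) = poch c k * (c + k) :=
  ascPochhammer_succ_eval k c

lemma poch_succ' (c : ℝ) (k : ℕ) : poch c (k + 1) = c * poch (c + 1) k := by
  simp [poch, ascPochhammer_succ_left, eval_comp]

lemma poch_pos {c : ℝ} (hc : 0 < c) (k : ℕ) : 0 < poch c k := ascPochhammer_pos k c hc

noncomputable def jacobiCoeff (α β : ℝ) (n k : ℕ) : ℝ :=
  poch (-(n : ℝ)) k * poch ((n : ℝ) + α + β + 1) k / (poch (α + 1) k * 2 ^ k * (k ! : ℝ))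

@[simp] lemma jacobiCoeff_zero_right (α β : ℝ) (n : ℕ) : jacobiCoeff α β n 0 = 1 := by
  simp [jacobiCoeff, poch_zero]

lemma jacobiCoeff_eq_zero_of_lt (α β : ℝ) {n k : ℕ} (h : n < k) :
    jacobiCoeff α β n k = 0 := by
  simp [jacobiCoeff, poch, ascPochhammer_eval_neg_coe_nat_of_lt h]

lemma jacobiCoeff_self_ne_zero {α β : ℝ} (hα : -1 < α) (hβ : -1 < β) (n : ℕ) :
    jacobiCoeff α β n n ≠ 0 := by
  have hD : 0 < poch (α + 1) n * 2 ^ n * (n ! : ℝ) := by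
    have := poch_pos (show 0 < α + 1 by linarith) n
    positivity
  refine div_ne_zero (mul_ne_zero ?_ ?_) hD.ne'
  · rw [Ne, poch, ascPochhammer_eval_eq_zero_iff]
    rintro ⟨i, hi, h⟩
    have : (i : ℝ) < n := by exact_mod_cast hi
    linarith
  · rw [Ne, poch, ascPochhammer_eval_eq_zero_iff]
    rintro ⟨i, hi, h⟩
    have : (1 : ℝ) ≤ n := by exact_mod_cast (Nat.zero_lt_of_lt hi)
    have : (0 : ℝ) ≤ i := i.cast_nonneg
    linarith

lemma jacobiCoeff_succ_eq_beta_succ (α β : ℝ) (n j : ℕ) :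
    (2 * n + 2 + (α + β + 1)) * jacobiCoeff α β (n + 1) j =
      (n + 1 + (α + β + 1)) * jacobiCoeff α (β + 1) (n + 1) j
        + (n + 1) * jacobiCoeff α (β + 1) n j := by
  set c : ℝ := n + 1 + α + β + 1
  have hc : c * poch (c + 1) j = poch c j * (c + j) := by rw [← poch_succ', poch_succ]
  have hn : -((n : ℝ) + 1) * poch (-n) j =
      poch (-((n : ℝ) + 1)) j * (-((n : ℝ) + 1) + j) := by
    rw [← poch_succ, poch_succ']
    ring_nf
  simp only [jacobiCoeff]
  push_cast
  rw [show (n : ℝ) + 1 + α + (β + 1) + 1 = c + 1 by ring,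
    show (n : ℝ) + α + (β + 1) + 1 = c by ring, show (n : ℝ) + 1 + α + β + 1 = c by ring,
    show 2 * (n : ℝ) + 2 + (α + β + 1) = c + (n + 1) by ring,
    show (n : ℝ) + 1 + (α + β + 1) = c by ring]
  linear_combination (poch c j / (poch (α + 1) j * 2 ^ j * (j ! : ℝ))) * hn
    - (poch (-((n : ℝ) + 1)) j / (poch (α + 1) j * 2 ^ j * (j ! : ℝ))) * hc

lemma jacobiCoeff_beta_succ_sub_half {α : ℝ} (hα : -1 < α) (β : ℝ) (n i : ℕ) :
    (2 * n + α + β + 2) * (jacobiCoeff α (β + 1) n (i + 1) - jacobiCoeff α (β + 1) n i / 2) =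
      (n + α + 1) * jacobiCoeff α β (n + 1) (i + 1)
        + (n + β + 1) * jacobiCoeff α β n (i + 1) := by
  have hp : 0 < poch (α + 1) i := poch_pos (by linarith) i
  have hi : 0 < α + 1 + i := by have := i.cast_nonneg (α := ℝ); linarith
  simp only [jacobiCoeff]
  push_cast
  rw [show (n : ℝ) + α + (β + 1) + 1 = n + α + β + 2 by ring,
    show (n : ℝ) + 1 + α + β + 1 = n + α + β + 2 by ring, Nat.factorial_succ,
    poch_succ (α + 1), poch_succ (-(n : ℝ)), poch_succ (n + α + β + 2),
    poch_succ' (-((n : ℝ) + 1)), poch_succ' (n + α + β + 1),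
    show -((n : ℝ) + 1) + 1 = -n by ring,
    show (n : ℝ) + α + β + 1 + 1 = n + α + β + 2 by ring]
  push_cast
  field_simp
  ring

/-- `R_n^{(α,β)}(1 - t)` as a polynomial in `t`. -/
noncomputable def jacobiROneSub (α β : ℝ) (n : ℕ) : ℝ[X] :=
  ∑ k ∈ range (n + 1), C (jacobiCoeff α β n k) * X ^ k

@[simp] lemma coeff_jacobiROneSub (α β : ℝ) (n k : ℕ) :
    (jacobiROneSub α β n).coeff k = jacobiCoeff α β n k := by
  simp only [jacobiROneSub, finsetSum_coeff, coeff_C_mul_X_pow, sum_ite_eq, mem_range]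
  split_ifs with h
  · rfl
  · exact (jacobiCoeff_eq_zero_of_lt α β (by omega)).symm

lemma jacobiROneSub_comp_one_sub_X (α β : ℝ) (n : ℕ) :
    (jacobiROneSub α β n).comp (1 - X) = jacobiR α β n := by
  simp [jacobiROneSub, jacobiR, jacobiCoeff]

lemma jacobiROneSub_degree {α β : ℝ} (hα : -1 < α) (hβ : -1 < β) (n : ℕ) :
    (jacobiROneSub α β n).degree = n := by
  refine degree_eq_of_le_of_coeff_ne_zero ?_ (by simpa using jacobiCoeff_self_ne_zero hα hβ n)
  rw [degree_le_iff_coeff_zero]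
  intro k hk
  rw [coeff_jacobiROneSub, jacobiCoeff_eq_zero_of_lt α β (by exact_mod_cast hk)]

lemma jacobiROneSub_succ_eq_beta_succ (α β : ℝ) (n : ℕ) :
    C (2 * n + 2 + (α + β + 1)) * jacobiROneSub α β (n + 1) =
      C (n + 1 + (α + β + 1)) * jacobiROneSub α (β + 1) (n + 1)
        + C (n + 1 : ℝ) * jacobiROneSub α (β + 1) n := by
  ext j
  simp only [coeff_add, coeff_C_mul, coeff_jacobiROneSub]
  exact jacobiCoeff_succ_eq_beta_succ α β n j

lemma one_sub_half_X_mul_jacobiROneSub {α : ℝ} (hα : -1 < α) (β : ℝ) (n : ℕ) :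
    C (2 * n + α + β + 2) * ((1 - C (1 / 2) * X) * jacobiROneSub α (β + 1) n) =
      C (n + α + 1) * jacobiROneSub α β (n + 1) + C (n + β + 1) * jacobiROneSub α β n := by
  ext j
  cases j with
  | zero =>
    simp
    ring
  | succ i =>
    simp only [coeff_add, coeff_C_mul, sub_mul, one_mul, coeff_sub, mul_assoc, coeff_X_mul,
      coeff_jacobiROneSub]
    linear_combination jacobiCoeff_beta_succ_sub_half hα β n i

lemma genCheb_two_mul (α β : ℝ) (n : ℕ) :
    genCheb α β (2 * n) = (jacobiROneSub α β n).comp (2 - 2 * X ^ 2) := by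
  rw [genCheb, if_pos (by omega), Nat.mul_div_cancel_left n two_pos,
    ← jacobiROneSub_comp_one_sub_X, comp_assoc]
  congr 1
  simp only [sub_comp, one_comp, X_comp]
  ring

lemma genCheb_two_mul_add_one (α β : ℝ) (n : ℕ) :
    genCheb α β (2 * n + 1) = X * (jacobiROneSub α (β + 1) n).comp (2 - 2 * X ^ 2) := by
  rw [genCheb, if_neg (by omega), show (2 * n + 1) / 2 = n by omega,
    ← jacobiROneSub_comp_one_sub_X, comp_assoc]
  congr 2
  simp only [sub_comp, one_comp, X_comp]
  ring

lemma genCheb_zero (α β : ℝ) : genCheb α β 0 = 1 := by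
  simpa [jacobiROneSub] using genCheb_two_mul α β 0

lemma genCheb_one (α β : ℝ) : genCheb α β 1 = X := by
  simpa [jacobiROneSub] using genCheb_two_mul_add_one α β 0

lemma genCheb_four (α β : ℝ) :
    genCheb α β 4 = C (jacobiCoeff α β 2 2) * (2 - 2 * X ^ 2) ^ 2
      + C (jacobiCoeff α β 2 1) * (2 - 2 * X ^ 2) + 1 := by
  rw [show 4 = 2 * 2 from rfl, genCheb_two_mul]
  simp [jacobiROneSub, sum_range_succ]
  ring

lemma genCheb_degree {α β : ℝ} (hα : -1 < α) (hβ : -1 < β) (n : ℕ) :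
    (genCheb α β n).degree = n := by
  have hq : (2 - 2 * X ^ 2 : ℝ[X]).degree = 2 := by compute_degree!
  obtain ⟨k, rfl | rfl⟩ := Nat.even_or_odd' n
  · rw [genCheb_two_mul, degree_comp (by rw [hq]; norm_num), hq, jacobiROneSub_degree hα hβ]
    norm_cast
    ring
  · rw [genCheb_two_mul_add_one, degree_mul, degree_X,
      degree_comp (by rw [hq]; norm_num), hq, jacobiROneSub_degree hα (by linarith)]
    norm_cast
    ring

noncomputable def genChebA (α β : ℝ) (n : ℕ) : ℝ :=
  ((n / 2 : ℕ) + if Even n then α + β + 1 else α + 1) / (n + (α + β + 1))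

noncomputable def genChebC (α β : ℝ) (n : ℕ) : ℝ :=
  ((n / 2 : ℕ) + if Even n then 0 else β + 1) / (n + (α + β + 1))

lemma genChebA_two_mul (α β : ℝ) (k : ℕ) :
    genChebA α β (2 * k) = (k + (α + β + 1)) / (2 * k + (α + β + 1)) := by
  simp [genChebA]

lemma genChebA_two_mul_add_one (α β : ℝ) (k : ℕ) :
    genChebA α β (2 * k + 1) = (k + α + 1) / (2 * k + α + β + 2) := by
  simp only [genChebA, Nat.not_even_two_mul_add_one, if_false, show (2 * k + 1) / 2 = k by omega]
  push_cast
  ring_nf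

lemma genChebC_two_mul (α β : ℝ) (k : ℕ) :
    genChebC α β (2 * k) = k / (2 * k + (α + β + 1)) := by
  simp [genChebC]

lemma genChebC_two_mul_add_one (α β : ℝ) (k : ℕ) :
    genChebC α β (2 * k + 1) = (k + β + 1) / (2 * k + α + β + 2) := by
  simp only [genChebC, Nat.not_even_two_mul_add_one, if_false, show (2 * k + 1) / 2 = k by omega]
  push_cast
  ring_nf

lemma genChebA_pos {α β : ℝ} (hα : -1 < α) (hβ : -1 < β) {n : ℕ} (hn : n ≠ 0) :
    0 < genChebA α β n := by
  obtain ⟨k, rfl | rfl⟩ := Nat.even_or_odd' n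
  · have : (1 : ℝ) ≤ k := by exact_mod_cast Nat.one_le_iff_ne_zero.2 (by omega)
    rw [genChebA_two_mul]
    exact div_pos (by linarith) (by linarith)
  · have := k.cast_nonneg (α := ℝ)
    rw [genChebA_two_mul_add_one]
    exact div_pos (by linarith) (by linarith)

lemma genChebC_pos {α β : ℝ} (hα : -1 < α) (hβ : -1 < β) {n : ℕ} (hn : n ≠ 0) :
    0 < genChebC α β n := by
  obtain ⟨k, rfl | rfl⟩ := Nat.even_or_odd' n
  · have : (1 : ℝ) ≤ k := by exact_mod_cast Nat.one_le_iff_ne_zero.2 (by omega)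
    rw [genChebC_two_mul]
    exact div_pos (by linarith) (by linarith)
  · have := k.cast_nonneg (α := ℝ)
    rw [genChebC_two_mul_add_one]
    exact div_pos (by linarith) (by linarith)

lemma eq_C_div_mul_add_of_C_mul_eq {d u v : ℝ} {P Q R : ℝ[X]} (hd : d ≠ 0)
    (h : C d * P = C u * Q + C v * R) : P = C (u / d) * Q + C (v / d) * R := by
  have hC : C d⁻¹ * C d = 1 := by rw [← C_mul, inv_mul_cancel₀ hd, C_1]
  calc P = C d⁻¹ * (C d * P) := by rw [← mul_assoc, hC, one_mul]
    _ = _ := by rw [h, div_eq_inv_mul, div_eq_inv_mul, C_mul, C_mul]; ring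

lemma X_mul_genCheb {α β : ℝ} (hα : -1 < α) (hβ : -1 < β) (n : ℕ) :
    X * genCheb α β (n + 1) =
      C (genChebA α β (n + 1)) * genCheb α β (n + 2)
        + C (genChebC α β (n + 1)) * genCheb α β n := by
  obtain ⟨k, rfl | rfl⟩ := Nat.even_or_odd' n
  · have hX : (1 - C (1 / 2 : ℝ) * X).comp (2 - 2 * X ^ 2) = X ^ 2 := by
      simp only [sub_comp, one_comp, mul_comp, C_comp, X_comp]
      rw [mul_sub, ← mul_assoc, ← C_ofNat, ← C_mul]
      norm_num
    have h := congrArg (·.comp (2 - 2 * X ^ 2)) (one_sub_half_X_mul_jacobiROneSub hα β k)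
    simp only [mul_comp, add_comp, C_comp, hX] at h
    rw [show 2 * k + 2 = 2 * (k + 1) by ring, genCheb_two_mul_add_one, genChebA_two_mul_add_one,
      genChebC_two_mul_add_one, genCheb_two_mul, genCheb_two_mul, ← mul_assoc, ← sq]
    have := k.cast_nonneg (α := ℝ)
    exact eq_C_div_mul_add_of_C_mul_eq (by linarith) h
  · have h := congrArg (X * ·.comp (2 - 2 * X ^ 2)) (jacobiROneSub_succ_eq_beta_succ α β k)
    simp only [mul_comp, add_comp, C_comp, mul_add, mul_left_comm X] at h
    rw [show 2 * k + 1 + 1 = 2 * (k + 1) by ring, show 2 * k + 1 + 2 = 2 * (k + 1) + 1 by ring,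
      genCheb_two_mul, genCheb_two_mul_add_one, genCheb_two_mul_add_one, genChebA_two_mul,
      genChebC_two_mul]
    have := k.cast_nonneg (α := ℝ)
    convert eq_C_div_mul_add_of_C_mul_eq (by linarith) h using 4 <;> push_cast <;> ring

noncomputable def sqCoeffUp (α β : ℝ) (n : ℕ) : ℝ :=
  genChebA α β n * genChebA α β (n + 1)

noncomputable def sqCoeffDiag (α β : ℝ) (n : ℕ) : ℝ :=
  genChebA α β n * genChebC α β (n + 1) + genChebC α β n * genChebA α β (n - 1)

noncomputable def sqCoeffDown (α β : ℝ) (n : ℕ) : ℝ :=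
  genChebC α β n * genChebC α β (n - 1)

noncomputable def quartCoeffDiag (α β : ℝ) (n : ℕ) : ℝ :=
  sqCoeffUp α β n * sqCoeffDown α β (n + 2) + sqCoeffDiag α β n ^ 2
    + sqCoeffDown α β n * sqCoeffUp α β (n - 2)

lemma X_sq_mul_genCheb {α β : ℝ} (hα : -1 < α) (hβ : -1 < β) (n : ℕ) :
    X ^ 2 * genCheb α β (n + 2) = C (sqCoeffUp α β (n + 2)) * genCheb α β (n + 4)
      + C (sqCoeffDiag α β (n + 2)) * genCheb α β (n + 2)
      + C (sqCoeffDown α β (n + 2)) * genCheb α β n := by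
  have h0 := X_mul_genCheb hα hβ n
  have h1 := X_mul_genCheb hα hβ (n + 1)
  have h2 := X_mul_genCheb hα hβ (n + 2)
  simp only [add_assoc, Nat.reduceAdd] at h1 h2
  rw [sq, mul_assoc, h1, mul_add, mul_left_comm, mul_left_comm X, h2, h0]
  simp only [sqCoeffUp, sqCoeffDiag, sqCoeffDown, add_assoc, Nat.reduceAdd,
    show n + 2 - 1 = n + 1 from rfl, C_add, C_mul]
  ring

lemma tendsto_natCast_add_div_two_mul_add (c d : ℝ) :
    Tendsto (fun k : ℕ => ((k : ℝ) + c) / (2 * k + d)) atTop (𝓝 (1 / 2)) := by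
  have hden : Tendsto (fun k : ℕ => 2 * (k : ℝ) + d) atTop atTop :=
    tendsto_atTop_add_const_right _ d (tendsto_natCast_atTop_atTop.const_mul_atTop two_pos)
  have h := (tendsto_const_nhds (x := c - d / 2)).div_atTop hden |>.const_add (1 / 2)
  rw [add_zero] at h
  refine h.congr' ?_
  filter_upwards [hden.eventually_gt_atTop 0] with k hk
  field_simp
  ring

lemma tendsto_of_tendsto_two_mul_of_tendsto_two_mul_add_one {X : Type*} {f : ℕ → X}
    {l : Filter X} (h₀ : Tendsto (fun k => f (2 * k)) atTop l)
    (h₁ : Tendsto (fun k => f (2 * k + 1)) atTop l) : Tendsto f atTop l := fun _ hs =>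
  Eventually.atTop_of_arithmetic two_ne_zero fun k hk => by
    interval_cases k
    exacts [h₀ hs, h₁ hs]

lemma tendsto_genChebA (α β : ℝ) : Tendsto (genChebA α β) atTop (𝓝 (1 / 2)) := by
  refine tendsto_of_tendsto_two_mul_of_tendsto_two_mul_add_one ?_ ?_
  · simpa only [genChebA_two_mul] using
      tendsto_natCast_add_div_two_mul_add (α + β + 1) (α + β + 1)
  · simpa only [genChebA_two_mul_add_one, add_assoc] using
      tendsto_natCast_add_div_two_mul_add (α + 1) (α + β + 2)

lemma tendsto_genChebC (α β : ℝ) : Tendsto (genChebC α β) atTop (𝓝 (1 / 2)) := by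
  refine tendsto_of_tendsto_two_mul_of_tendsto_two_mul_add_one ?_ ?_
  · simpa only [genChebC_two_mul, add_zero] using
      tendsto_natCast_add_div_two_mul_add 0 (α + β + 1)
  · simpa only [genChebC_two_mul_add_one, add_assoc] using
      tendsto_natCast_add_div_two_mul_add (β + 1) (α + β + 2)

lemma tendsto_sqCoeffDiag (α β : ℝ) : Tendsto (sqCoeffDiag α β) atTop (𝓝 (1 / 2)) := by
  have hA := tendsto_genChebA α β
  have hC := tendsto_genChebC α β
  rw [show (1 / 2 : ℝ) = 1 / 2 * (1 / 2) + 1 / 2 * (1 / 2) by norm_num]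
  exact (hA.mul (hC.comp (tendsto_add_atTop_nat 1))).add
    (hC.mul (hA.comp (tendsto_sub_atTop_nat 1)))

lemma tendsto_quartCoeffDiag (α β : ℝ) :
    Tendsto (quartCoeffDiag α β) atTop (𝓝 (3 / 8)) := by
  have hA := tendsto_genChebA α β
  have hC := tendsto_genChebC α β
  have hUp : Tendsto (sqCoeffUp α β) atTop (𝓝 (1 / 4)) := by
    rw [show (1 / 4 : ℝ) = 1 / 2 * (1 / 2) by norm_num]
    exact hA.mul (hA.comp (tendsto_add_atTop_nat 1))
  have hDown : Tendsto (sqCoeffDown α β) atTop (𝓝 (1 / 4)) := by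
    rw [show (1 / 4 : ℝ) = 1 / 2 * (1 / 2) by norm_num]
    exact hC.mul (hC.comp (tendsto_sub_atTop_nat 1))
  rw [show (3 / 8 : ℝ) = 1 / 4 * (1 / 4) + (1 / 2) ^ 2 + 1 / 4 * (1 / 4) by norm_num]
  exact ((hUp.mul (hDown.comp (tendsto_add_atTop_nat 2))).add
    ((tendsto_sqCoeffDiag α β).pow 2)).add (hDown.mul (hUp.comp (tendsto_sub_atTop_nat 2)))

lemma linCoeff_four_self_limit {α : ℝ} (hα : -1 < α) (β : ℝ) :
    1 + jacobiCoeff α β 2 1 * (2 - 2 * (1 / 2))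
        + jacobiCoeff α β 2 2 * (4 - 8 * (1 / 2) + 4 * (3 / 8)) =
      ((α + β + 1) ^ 2 + 2 * (α - β) ^ 2 + 3 * (α + β + 1)) / (8 * (α + 1) * (α + 2)) := by
  have h₁ : α + 1 ≠ 0 := by linarith
  have h₂ : α + 1 + 1 ≠ 0 := by linarith
  have h₂' : α + 2 ≠ 0 := by linarith
  simp only [jacobiCoeff, poch_succ, poch_zero, Nat.factorial, Nat.cast_ofNat, Nat.cast_zero,
    Nat.cast_one, add_zero]
  field_simp
  ring

noncomputable def genChebBasis {α β : ℝ} (hα : -1 < α) (hβ : -1 < β) :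
    Module.Basis ℕ ℝ ℝ[X] :=
  Polynomial.Sequence.basis ⟨genCheb α β, genCheb_degree hα hβ⟩ fun i =>
    (leadingCoeff_ne_zero.2 (Polynomial.Sequence.ne_zero _ i)).isUnit

section Coordinates

variable {α β : ℝ} (hα : -1 < α) (hβ : -1 < β)

@[simp] lemma genChebBasis_repr_genCheb (n : ℕ) :
    (genChebBasis hα hβ).repr (genCheb α β n) = Finsupp.single n 1 := by
  rw [← (genChebBasis hα hβ).repr_self n, genChebBasis, Polynomial.Sequence.basis_eq_self]

@[simp] lemma genChebBasis_repr_C_mul (c : ℝ) (p : ℝ[X]) :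
    (genChebBasis hα hβ).repr (C c * p) = c • (genChebBasis hα hβ).repr p := by
  rw [C_mul', map_smul]

lemma genChebBasis_repr_sum (s : Finset ℕ) (c : ℕ → ℝ) (j : ℕ) :
    (genChebBasis hα hβ).repr (∑ k ∈ s, C (c k) * genCheb α β k) j =
      if j ∈ s then c j else 0 := by
  simp [map_sum, Finsupp.single_apply]

lemma genChebBasis_repr_X_sq_mul (n j : ℕ) :
    (genChebBasis hα hβ).repr (X ^ 2 * genCheb α β (n + 2)) j =
      (if j = n + 4 then sqCoeffUp α β (n + 2) else 0)
        + (if j = n + 2 then sqCoeffDiag α β (n + 2) else 0)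
        + (if j = n then sqCoeffDown α β (n + 2) else 0) := by
  simp [X_sq_mul_genCheb hα hβ, Finsupp.single_apply, eq_comm]

lemma genChebBasis_repr_X_pow_four_mul_self (n : ℕ) :
    (genChebBasis hα hβ).repr (X ^ 4 * genCheb α β (n + 4)) (n + 4) =
      quartCoeffDiag α β (n + 4) := by
  rw [show X ^ 4 * genCheb α β (n + 4) = X ^ 2 * (X ^ 2 * genCheb α β (n + 2 + 2)) by ring,
    X_sq_mul_genCheb hα hβ]
  simp only [mul_add, mul_left_comm _ (C _), map_add, genChebBasis_repr_C_mul, Finsupp.add_apply,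
    Finsupp.smul_apply, smul_eq_mul]
  rw [show n + 2 + 4 = n + 4 + 2 by ring, genChebBasis_repr_X_sq_mul, genChebBasis_repr_X_sq_mul,
    genChebBasis_repr_X_sq_mul]
  simp [quartCoeffDiag]
  ring

end Coordinates

def IsLinearization (α β : ℝ) (g : ℕ → ℕ → ℕ → ℝ) : Prop :=
  ∀ m n : ℕ, genCheb α β m * genCheb α β n =
    ∑ k ∈ Icc (Nat.dist m n) (m + n), C (g m n k) * genCheb α β k

namespace IsLinearization

variable {α β : ℝ} {g : ℕ → ℕ → ℕ → ℝ} (hg : IsLinearization α β g)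
  (hα : -1 < α) (hβ : -1 < β)
include hg hα hβ

lemma repr_mul (m n k : ℕ) :
    (genChebBasis hα hβ).repr (genCheb α β m * genCheb α β n) k =
      if k ∈ Icc (Nat.dist m n) (m + n) then g m n k else 0 := by
  rw [hg m n, genChebBasis_repr_sum]

lemma repr_mul_zero (m n : ℕ) :
    (genChebBasis hα hβ).repr (genCheb α β m * genCheb α β n) 0 =
      if m = n then g n n 0 else 0 := by
  rw [hg.repr_mul]
  by_cases h : m = n
  · subst h
    simp
  · simp only [mem_Icc, Nat.dist, h, if_false]
    rw [if_neg (by omega)]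

lemma repr_mul_mul_zero (m n k : ℕ) :
    (genChebBasis hα hβ).repr (genCheb α β m * genCheb α β n * genCheb α β k) 0 =
      if k ∈ Icc (Nat.dist m n) (m + n) then g m n k * g k k 0 else 0 := by
  simp only [hg m n, sum_mul, mul_assoc, map_sum, genChebBasis_repr_C_mul, Finsupp.coe_finsetSum,
    Finset.sum_apply, Finsupp.smul_apply, hg.repr_mul_zero, smul_eq_mul, mul_ite, mul_zero,
    sum_ite_eq']

lemma duality {m n : ℕ} (hmn : m ≤ 2 * n) : g m n n * g n n 0 = g n n m * g m m 0 := by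
  have h := hg.repr_mul_mul_zero hα hβ n n m
  rw [show genCheb α β n * genCheb α β n * genCheb α β m =
      genCheb α β m * genCheb α β n * genCheb α β n by ring, hg.repr_mul_mul_zero,
    if_pos (by simp only [mem_Icc, Nat.dist]; omega),
    if_pos (by simp only [mem_Icc, Nat.dist]; omega)] at h
  exact h

lemma diag_zero_zero : g 0 0 0 = 1 := by
  have h := hg.repr_mul_zero hα hβ 0 0
  rw [genCheb_zero, mul_one, ← genCheb_zero α β, genChebBasis_repr_genCheb] at h
  simpa using h.symm

lemma diag_zero_one : g 1 1 0 = genChebC α β 1 := by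
  have h := hg.repr_mul_zero hα hβ 1 1
  have hX := X_mul_genCheb hα hβ 0
  rw [zero_add] at hX
  nth_rewrite 1 [genCheb_one] at h
  rw [hX] at h
  simpa using h.symm

lemma genChebA_mul_diag_zero (n : ℕ) :
    genChebA α β (n + 1) * g (n + 2) (n + 2) 0 =
      genChebC α β (n + 2) * g (n + 1) (n + 1) 0 := by
  have h := congrArg (fun p => (genChebBasis hα hβ).repr p 0)
    (show X * genCheb α β (n + 1) * genCheb α β (n + 2) =
      genCheb α β (n + 1) * (X * genCheb α β (n + 1 + 1)) by ring)
  simp only [X_mul_genCheb hα hβ, add_mul, mul_add, mul_left_comm _ (C _), mul_assoc, map_add,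
    genChebBasis_repr_C_mul, Finsupp.add_apply, Finsupp.smul_apply, hg.repr_mul_zero,
    smul_eq_mul] at h
  simpa using h

lemma diag_zero_pos : ∀ n, 0 < g n n 0
  | 0 => by rw [hg.diag_zero_zero hα hβ]; exact one_pos
  | 1 => by rw [hg.diag_zero_one hα hβ]; exact genChebC_pos hα hβ one_ne_zero
  | n + 2 => by
    refine pos_of_mul_pos_right ?_ (genChebA_pos hα hβ n.succ_ne_zero).le
    rw [hg.genChebA_mul_diag_zero hα hβ n]
    exact mul_pos (genChebC_pos hα hβ (by omega)) (diag_zero_pos (n + 1))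

lemma neg_of_neg_dual {m n : ℕ} (hmn : m ≤ 2 * n) (h : g m n n < 0) : g n n m < 0 := by
  refine neg_of_mul_neg_left ?_ (hg.diag_zero_pos hα hβ m).le
  rw [← hg.duality hα hβ hmn]
  exact mul_neg_of_neg_of_pos h (hg.diag_zero_pos hα hβ n)

lemma linCoeff_four_self (n : ℕ) :
    g 4 (n + 4) (n + 4) = 1 + jacobiCoeff α β 2 1 * (2 - 2 * sqCoeffDiag α β (n + 4))
      + jacobiCoeff α β 2 2 *
        (4 - 8 * sqCoeffDiag α β (n + 4) + 4 * quartCoeffDiag α β (n + 4)) := by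
  set c₁ := jacobiCoeff α β 2 1
  set c₂ := jacobiCoeff α β 2 2
  have e : genCheb α β 4 * genCheb α β (n + 4) =
      C (1 + 2 * c₁ + 4 * c₂) * genCheb α β (n + 4)
      - C (2 * c₁ + 8 * c₂) * (X ^ 2 * genCheb α β (n + 2 + 2))
      + C (4 * c₂) * (X ^ 4 * genCheb α β (n + 4)) := by
    rw [genCheb_four]
    simp only [C_add, C_mul, C_ofNat, C_1]
    ring
  have h := hg.repr_mul hα hβ 4 (n + 4) (n + 4)
  rw [if_pos (by simp only [mem_Icc, Nat.dist]; omega), e] at h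
  rw [← h]
  simp only [map_add (genChebBasis hα hβ).repr, map_sub (genChebBasis hα hβ).repr,
    genChebBasis_repr_C_mul, Finsupp.add_apply, Finsupp.coe_sub, Pi.sub_apply, Finsupp.smul_apply,
    smul_eq_mul, genChebBasis_repr_genCheb, genChebBasis_repr_X_sq_mul,
    genChebBasis_repr_X_pow_four_mul_self]
  simp
  ring

lemma tendsto_linCoeff_four_self :
    Tendsto (fun n => g 4 (n + 4) (n + 4)) atTop
      (𝓝 (((α + β + 1) ^ 2 + 2 * (α - β) ^ 2 + 3 * (α + β + 1)) /
        (8 * (α + 1) * (α + 2)))) := by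
  have hs := (tendsto_sqCoeffDiag α β).comp (tendsto_add_atTop_nat 4)
  have hq := (tendsto_quartCoeffDiag α β).comp (tendsto_add_atTop_nat 4)
  rw [← linCoeff_four_self_limit hα β]
  refine Tendsto.congr (fun n => (hg.linCoeff_four_self hα hβ n).symm) ?_
  exact ((((tendsto_const_nhds (x := (2 : ℝ))).sub (hs.const_mul 2)).const_mul
      (jacobiCoeff α β 2 1)).const_add 1).add
    ((((tendsto_const_nhds (x := (4 : ℝ))).sub (hs.const_mul 8)).add (hq.const_mul 4)).const_mul
      (jacobiCoeff α β 2 2))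

end IsLinearization

/-- If `a² + 2b² + 3a < 0`, then `g_T(2m+1, 2m+1; 4) < 0` for all sufficiently large `m`. -/
theorem stmt16 (α β : ℝ) (hα : -1 < α) (hβ : -1 < β)
    (h : (α + β + 1) ^ 2 + 2 * (α - β) ^ 2 + 3 * (α + β + 1) < 0)
    (g : ℕ → ℕ → ℕ → ℝ)
    (hg : ∀ m n : ℕ, genCheb α β m * genCheb α β n =
      ∑ k ∈ Finset.Icc (Nat.dist m n) (m + n), Polynomial.C (g m n k) * genCheb α β k) :
    ∃ M : ℕ, ∀ m : ℕ, M ≤ m → g (2 * m + 1) (2 * m + 1) 4 < 0 := by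
  have hlin : IsLinearization α β g := hg
  have hneg :
      ((α + β + 1) ^ 2 + 2 * (α - β) ^ 2 + 3 * (α + β + 1)) / (8 * (α + 1) * (α + 2)) < 0 :=
    div_neg_of_neg_of_pos h (by nlinarith)
  obtain ⟨M, hM⟩ :=
    eventually_atTop.1 ((hlin.tendsto_linCoeff_four_self hα hβ).eventually_lt_const hneg)
  refine ⟨M + 2, fun m hm => ?_⟩
  obtain ⟨n, hn⟩ : ∃ n, 2 * m + 1 = n + 4 := ⟨2 * m - 3, by omega⟩
  rw [hn]
  exact hlin.neg_of_neg_dual hα hβ (by omega) (hM n (by omega))
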